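/- Let p ≥ 2 and let H be the complete bipartite graph K_{2,p}. Then q₁(H) + q₂(H) = 2p + 2 > 2p + 1 = d₁(H) + d₂(H) + 1, where q₁(H) ≥ q₂(H) are the two largest eigenvalues (with multiplicity) of the signless Laplacian Q(H) and d₁(H) ≥ d₂(H) are the two largest vertex degrees of H. -/

import Mathlib

/-
The signless Laplacian of `K_{2,p}` has spectrum `p + 2, p, 2, …, 2, 0`. If `Q z = μ z`, summing
the eigenvalue equation over each part gives `μ · Σ_s z = μ · Σ_{sᶜ} z`; so either `μ = 0`, or the
part sums agree and `μ = p + 2`, or both vanish and a nonzero coordinate of `z` forces `μ ∈ {p, 2}`.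
The values `p + 2` and `p` are attained by explicit eigenvectors, and `p + 2` is simple because
two copies of it would already exceed `Σ μᵢ² = tr Q² = 2p² + 8p`.
-/

open Matrix

/-- The signless Laplacian matrix `Q(G) = D + A` of a simple graph, over `ℝ`. -/
def sLapMatrix {m : ℕ} (G : SimpleGraph (Fin m)) [DecidableRel G.Adj] :
    Matrix (Fin m) (Fin m) ℝ :=
  G.degMatrix ℝ + G.adjMatrix ℝ

/-- `q` lists the eigenvalues of `A` (with multiplicity) in non-increasing order. -/
def IsEigSeq {m : ℕ} (A : Matrix (Fin m) (Fin m) ℝ) (q : Fin m → ℝ) : Prop :=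
  Antitone q ∧ ∃ (hA : A.IsHermitian) (σ : Equiv.Perm (Fin m)),
    ∀ i, q i = hA.eigenvalues (σ i)

/-- `d` lists the degrees of `G` (with multiplicity) in non-increasing order. -/
def IsDegSeq {m : ℕ} (G : SimpleGraph (Fin m)) [DecidableRel G.Adj] (d : Fin m → ℕ) : Prop :=
  Antitone d ∧ ∃ σ : Equiv.Perm (Fin m), ∀ i, d i = G.degree (σ i)

/-- The complete bipartite graph `K_{2,p}` on `p + 2` vertices: the part of size `2` is
`{0, 1}` and the part of size `p` is the set of the remaining vertices. -/
def K2p (p : ℕ) : SimpleGraph (Fin (p + 2)) where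
  Adj a b := (a.val ≤ 1 ∧ 2 ≤ b.val) ∨ (b.val ≤ 1 ∧ 2 ≤ a.val)
  symm := ⟨by intro a b h; tauto⟩
  loopless := ⟨by intro a h; rcases h with ⟨h1, h2⟩ | ⟨h1, h2⟩ <;> omega⟩

instance K2p.adjDecidable (p : ℕ) : DecidableRel (K2p p).Adj := fun a b =>
  inferInstanceAs (Decidable ((a.val ≤ 1 ∧ 2 ≤ b.val) ∨ (b.val ≤ 1 ∧ 2 ≤ a.val)))

open Finset SimpleGraph

theorem Antitone.le_apply_one {α : Type*} [Preorder α] {n : ℕ} {f : Fin (n + 2) → α}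
    (hf : Antitone f) {j k : Fin (n + 2)} (hjk : j ≠ k) {c : α} (hj : c ≤ f j)
    (hk : c ≤ f k) : c ≤ f 1 := by
  have one_le : ∀ i : Fin (n + 2), i ≠ 0 → 1 ≤ i := fun i hi => by
    rw [Fin.le_iff_val_le_val, Fin.val_one]
    exact Nat.one_le_iff_ne_zero.mpr (Fin.val_ne_iff.mpr hi)
  by_cases hj0 : j = 0
  · exact hk.trans (hf (one_le k (hj0 ▸ hjk.symm)))
  · exact hj.trans (hf (one_le j hj0))

namespace Matrix.IsHermitian
variable {n : Type*} [Fintype n] [DecidableEq n] {A : Matrix n n ℝ} (hA : A.IsHermitian)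
include hA

theorem exists_eigenvalues_eq_of_mulVec_eq_smul {x : n → ℝ} {c : ℝ} (hx : x ≠ 0)
    (hAx : A *ᵥ x = c • x) : ∃ i, hA.eigenvalues i = c := by
  have hc : Module.End.HasEigenvalue (toLin' A) c :=
    Module.End.hasEigenvalue_of_hasEigenvector
      ⟨Module.End.mem_eigenspace_iff.mpr (by rwa [toLin'_apply]), hx⟩
  have := hc.mem_spectrum
  rwa [spectrum_toLin', hA.spectrum_real_eq_range_eigenvalues] at this

theorem sum_eigenvalues_sq : ∑ i, hA.eigenvalues i ^ 2 = (A * A).trace := by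
  conv_rhs => rw [hA.spectral_theorem, ← map_mul, Unitary.conjStarAlgAut_apply, trace_mul_cycle,
    Unitary.coe_star_mul_self, one_mul, diagonal_mul_diagonal, trace_diagonal]
  simp [sq]

theorem exists_mulVec_eq_smul (i : n) :
    ∃ z : n → ℝ, z ≠ 0 ∧ A *ᵥ z = hA.eigenvalues i • z :=
  ⟨_, (WithLp.ofLp_eq_zero 2).ne.2 <| hA.eigenvectorBasis.orthonormal.ne_zero i,
    hA.mulVec_eigenvectorBasis i⟩

end Matrix.IsHermitian

namespace IsEigSeq
variable {m : ℕ} {A : Matrix (Fin m) (Fin m) ℝ} {q : Fin m → ℝ}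

theorem exists_mulVec_eq_smul (hq : IsEigSeq A q) (k : Fin m) :
    ∃ z : Fin m → ℝ, z ≠ 0 ∧ A *ᵥ z = q k • z := by
  obtain ⟨-, hA, σ, hqσ⟩ := hq
  rw [hqσ]
  exact hA.exists_mulVec_eq_smul (σ k)

theorem exists_eq_of_mulVec_eq_smul (hq : IsEigSeq A q) {x : Fin m → ℝ} {c : ℝ} (hx : x ≠ 0)
    (hAx : A *ᵥ x = c • x) : ∃ k, q k = c := by
  obtain ⟨-, hA, σ, hqσ⟩ := hq
  obtain ⟨i, hi⟩ := hA.exists_eigenvalues_eq_of_mulVec_eq_smul hx hAx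
  exact ⟨σ.symm i, by rw [hqσ, σ.apply_symm_apply, hi]⟩

theorem sum_sq (hq : IsEigSeq A q) : ∑ k, q k ^ 2 = (A * A).trace := by
  obtain ⟨-, hA, σ, hqσ⟩ := hq
  simp_rw [hqσ]
  rw [Equiv.sum_comp σ (fun i => hA.eigenvalues i ^ 2), hA.sum_eigenvalues_sq]

end IsEigSeq

def SimpleGraph.IsCompleteBipartiteOn {V : Type*} (G : SimpleGraph V) (s : Finset V) : Prop :=
  ∀ a b, G.Adj a b ↔ (a ∈ s ↔ b ∉ s)

theorem sLapMatrix_mulVec_apply {m : ℕ} (G : SimpleGraph (Fin m)) [DecidableRel G.Adj]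
    (z : Fin m → ℝ) (a : Fin m) :
    (sLapMatrix G *ᵥ z) a = G.degree a * z a + ∑ b ∈ G.neighborFinset a, z b := by
  simp [sLapMatrix, add_mulVec, degMatrix_mulVec_apply, adjMatrix_mulVec_apply]

theorem trace_sLapMatrix_mul_self {m : ℕ} (G : SimpleGraph (Fin m)) [DecidableRel G.Adj] :
    (sLapMatrix G * sLapMatrix G).trace = ∑ v, ((G.degree v : ℝ) ^ 2 + G.degree v) := by
  refine sum_congr rfl fun v _ => ?_
  rw [diag_apply, sLapMatrix, degMatrix, add_mul, mul_add, mul_add]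
  simp only [Matrix.add_apply, diagonal_mul_diagonal, diagonal_mul, mul_diagonal, diagonal_apply_eq,
    adjMatrix_apply, G.irrefl, if_false, zero_mul, mul_zero, add_zero, zero_add,
    adjMatrix_mul_self_apply_self, sq]

namespace SimpleGraph.IsCompleteBipartiteOn

variable {V : Type*} [Fintype V] [DecidableEq V] {G : SimpleGraph V} [DecidableRel G.Adj]
  {s : Finset V}

theorem neighborFinset_eq (hG : G.IsCompleteBipartiteOn s) (a : V) :
    G.neighborFinset a = if a ∈ s then sᶜ else s := by
  ext b
  by_cases ha : a ∈ s <;> simp [ha, hG a b]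

theorem degree_eq (hG : G.IsCompleteBipartiteOn s) (a : V) :
    G.degree a = if a ∈ s then #sᶜ else #s := by
  rw [← card_neighborFinset_eq_degree, hG.neighborFinset_eq]
  split_ifs <;> rfl

theorem sum_degree (hG : G.IsCompleteBipartiteOn s) {M : Type*} [AddCommMonoid M] (f : ℕ → M) :
    ∑ v, f (G.degree v) = #s • f #sᶜ + #sᶜ • f #s := by
  rw [← sum_add_sum_compl s]
  congr 1
  · rw [sum_congr rfl fun v hv => by rw [hG.degree_eq, if_pos hv], sum_const]
  · rw [sum_congr rfl fun v hv => by rw [hG.degree_eq, if_neg (mem_compl.mp hv)], sum_const]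

end SimpleGraph.IsCompleteBipartiteOn

namespace SimpleGraph.IsCompleteBipartiteOn

variable {m : ℕ} {G : SimpleGraph (Fin m)} [DecidableRel G.Adj] {s : Finset (Fin m)}

theorem sLapMatrix_mulVec_apply_eq (hG : G.IsCompleteBipartiteOn s) (z : Fin m → ℝ) (a : Fin m) :
    (sLapMatrix G *ᵥ z) a =
      if a ∈ s then #sᶜ * z a + ∑ b ∈ sᶜ, z b else #s * z a + ∑ b ∈ s, z b := by
  rw [sLapMatrix_mulVec_apply, hG.degree_eq, hG.neighborFinset_eq]
  split_ifs <;> rfl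

theorem sLapMatrix_eigenvalue_cases (hG : G.IsCompleteBipartiteOn s) {z : Fin m → ℝ} {μ : ℝ}
    (hz : z ≠ 0) (hμ : sLapMatrix G *ᵥ z = μ • z) :
    μ = 0 ∨ μ = #s ∨ μ = #sᶜ ∨ μ = #s + #sᶜ := by
  set x := ∑ b ∈ s, z b
  set y := ∑ b ∈ sᶜ, z b
  have h_in : ∀ a ∈ s, #sᶜ * z a + y = μ * z a := fun a ha => by
    simpa [hG.sLapMatrix_mulVec_apply_eq, ha] using congrFun hμ a
  have h_out : ∀ a ∉ s, #s * z a + x = μ * z a := fun a ha => by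
    simpa [hG.sLapMatrix_mulVec_apply_eq, ha] using congrFun hμ a
  have hx : #sᶜ * x + #s * y = μ * x := calc
    _ = ∑ a ∈ s, (#sᶜ * z a + y) := by rw [sum_add_distrib, ← mul_sum, sum_const, nsmul_eq_mul]
    _ = μ * x := by rw [sum_congr rfl h_in, mul_sum]
  have hy : #s * y + #sᶜ * x = μ * y := calc
    _ = ∑ a ∈ sᶜ, (#s * z a + x) := by rw [sum_add_distrib, ← mul_sum, sum_const, nsmul_eq_mul]
    _ = μ * y := by rw [sum_congr rfl fun a ha => h_out a (mem_compl.mp ha), mul_sum]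
  rcases eq_or_ne μ 0 with h0 | h0
  · exact Or.inl h0
  have hxy : x = y := mul_left_cancel₀ h0 (by linarith)
  rcases eq_or_ne x 0 with hx0 | hx0
  · obtain ⟨a, ha⟩ := Function.ne_iff.mp hz
    by_cases has : a ∈ s
    · have := h_in a has
      exact Or.inr (Or.inr (Or.inl (mul_right_cancel₀ ha (by linarith))))
    · have := h_out a has
      exact Or.inr (Or.inl (mul_right_cancel₀ ha (by linarith)))
  · rw [← hxy] at hx
    exact Or.inr (Or.inr (Or.inr (mul_right_cancel₀ hx0 (by linear_combination -hx))))

theorem sLapMatrix_mulVec_ite_card (hG : G.IsCompleteBipartiteOn s) :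
    sLapMatrix G *ᵥ (fun a => if a ∈ s then (#sᶜ : ℝ) else #s) =
      (#s + #sᶜ : ℝ) • fun a => if a ∈ s then (#sᶜ : ℝ) else #s := by
  have h_in : ∑ b ∈ s, (if b ∈ s then (#sᶜ : ℝ) else #s) = #s * #sᶜ := by
    rw [sum_congr rfl fun b hb => if_pos hb, sum_const, nsmul_eq_mul]
  have h_out : ∑ b ∈ sᶜ, (if b ∈ s then (#sᶜ : ℝ) else #s) = #sᶜ * #s := by
    rw [sum_congr rfl fun b hb => if_neg (mem_compl.mp hb), sum_const, nsmul_eq_mul]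
  funext a
  rw [hG.sLapMatrix_mulVec_apply_eq]
  by_cases ha : a ∈ s <;> simp only [ha, if_true, if_false, h_in, h_out, Pi.smul_apply,
    smul_eq_mul] <;> ring

theorem sLapMatrix_mulVec_single_sub_single (hG : G.IsCompleteBipartiteOn s) {i j : Fin m}
    (hi : i ∈ s) (hj : j ∈ s) :
    sLapMatrix G *ᵥ (Pi.single i 1 - Pi.single j 1) =
      (#sᶜ : ℝ) • (Pi.single i 1 - Pi.single j 1 : Fin m → ℝ) := by
  funext a
  rw [hG.sLapMatrix_mulVec_apply_eq]
  by_cases ha : a ∈ s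
  · have h : ∀ b ∈ sᶜ, (Pi.single i 1 - Pi.single j 1 : Fin m → ℝ) b = 0 := fun b hb => by
      have := mem_compl.mp hb
      simp [show b ≠ i by grind, show b ≠ j by grind]
    simp [ha, hi, hj]
  · simp [ha, sum_sub_distrib, hi, hj, Pi.single_apply, show a ≠ i by grind, show a ≠ j by grind]

end SimpleGraph.IsCompleteBipartiteOn

theorem K2p_isCompleteBipartiteOn (p : ℕ) : (K2p p).IsCompleteBipartiteOn {0, 1} := by
  intro a b
  simp only [K2p, mem_insert, mem_singleton, Fin.ext_iff, Fin.val_zero, Fin.val_one]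
  omega

theorem K2p_card_compl_zero_one (p : ℕ) : #({0, 1} : Finset (Fin (p + 2)))ᶜ = p := by
  rw [card_compl, card_pair zero_ne_one, Fintype.card_fin, Nat.add_sub_cancel]

theorem K2p_degree (p : ℕ) (v : Fin (p + 2)) :
    (K2p p).degree v = if v ∈ ({0, 1} : Finset (Fin (p + 2))) then p else 2 := by
  rw [(K2p_isCompleteBipartiteOn p).degree_eq, K2p_card_compl_zero_one, card_pair zero_ne_one]

theorem K2p_trace_sLapMatrix_mul_self (p : ℕ) :
    (sLapMatrix (K2p p) * sLapMatrix (K2p p)).trace = 2 * p ^ 2 + 8 * p := by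
  rw [trace_sLapMatrix_mul_self,
    (K2p_isCompleteBipartiteOn p).sum_degree fun n => ((n : ℝ) ^ 2 + n),
    K2p_card_compl_zero_one, card_pair zero_ne_one]
  simp only [nsmul_eq_mul]
  push_cast
  ring

theorem K2p_sLapMatrix_eigenvalue_cases {p : ℕ} {z : Fin (p + 2) → ℝ} {μ : ℝ} (hz : z ≠ 0)
    (hμ : sLapMatrix (K2p p) *ᵥ z = μ • z) : μ = 0 ∨ μ = 2 ∨ μ = p ∨ μ = 2 + p := by
  have := (K2p_isCompleteBipartiteOn p).sLapMatrix_eigenvalue_cases hz hμ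
  rwa [card_pair zero_ne_one, K2p_card_compl_zero_one, Nat.cast_ofNat] at this

theorem K2p_exists_sLapMatrix_mulVec_eq_two_add_smul {p : ℕ} (hp : p ≠ 0) :
    ∃ z : Fin (p + 2) → ℝ, z ≠ 0 ∧ sLapMatrix (K2p p) *ᵥ z = (2 + p : ℝ) • z := by
  have hz := (K2p_isCompleteBipartiteOn p).sLapMatrix_mulVec_ite_card
  rw [card_pair zero_ne_one, K2p_card_compl_zero_one, Nat.cast_ofNat] at hz
  refine ⟨_, fun h => hp ?_, hz⟩
  simpa using congrFun h 0

theorem K2p_exists_sLapMatrix_mulVec_eq_smul (p : ℕ) :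
    ∃ z : Fin (p + 2) → ℝ, z ≠ 0 ∧ sLapMatrix (K2p p) *ᵥ z = (p : ℝ) • z := by
  have hz := (K2p_isCompleteBipartiteOn p).sLapMatrix_mulVec_single_sub_single
    (i := 0) (j := 1) (by simp) (by simp)
  rw [K2p_card_compl_zero_one] at hz
  refine ⟨_, fun h => ?_, hz⟩
  simpa using congrFun h 0

theorem IsDegSeq.K2p_zero_one {p : ℕ} (hp : 2 ≤ p) {d : Fin (p + 2) → ℕ}
    (hd : IsDegSeq (K2p p) d) : d 0 = p ∧ d 1 = p := by
  obtain ⟨hanti, τ, hτ⟩ := hd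
  have h_le : ∀ k, d k ≤ p := fun k => by rw [hτ, K2p_degree]; split_ifs <;> omega
  have h_attained : ∀ v ∈ ({0, 1} : Finset (Fin (p + 2))), p ≤ d (τ.symm v) := fun v hv => by
    rw [hτ, τ.apply_symm_apply, K2p_degree, if_pos hv]
  have hd1 : p ≤ d 1 := hanti.le_apply_one (τ.symm.injective.ne zero_ne_one)
    (h_attained 0 (by simp)) (h_attained 1 (by simp))
  exact ⟨(h_le 0).antisymm (hd1.trans (hanti (Fin.zero_le 1))), (h_le 1).antisymm hd1⟩

theorem IsEigSeq.K2p_zero_one {p : ℕ} (hp : 2 ≤ p) {q : Fin (p + 2) → ℝ}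
    (hq : IsEigSeq (sLapMatrix (K2p p)) q) : q 0 = p + 2 ∧ q 1 = p := by
  have h_cases : ∀ k, q k = 0 ∨ q k = 2 ∨ q k = p ∨ q k = 2 + p := fun k => by
    obtain ⟨z, hz, hzk⟩ := hq.exists_mulVec_eq_smul k
    exact K2p_sLapMatrix_eigenvalue_cases hz hzk
  obtain ⟨k₁, hk₁⟩ : ∃ k, q k = 2 + p := by
    obtain ⟨z, hz, hzk⟩ := K2p_exists_sLapMatrix_mulVec_eq_two_add_smul (by omega : p ≠ 0)
    exact hq.exists_eq_of_mulVec_eq_smul hz hzk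
  obtain ⟨k₂, hk₂⟩ : ∃ k, q k = p := by
    obtain ⟨z, hz, hzk⟩ := K2p_exists_sLapMatrix_mulVec_eq_smul p
    exact hq.exists_eq_of_mulVec_eq_smul hz hzk
  have h_sq : q 0 ^ 2 + q 1 ^ 2 ≤ 2 * p ^ 2 + 8 * p := by
    rw [← K2p_trace_sLapMatrix_mul_self, ← hq.sum_sq, ← sum_pair (f := (q · ^ 2)) zero_ne_one]
    exact sum_le_sum_of_subset_of_nonneg (subset_univ _) fun k _ _ => sq_nonneg (q k)
  have hpR : (2 : ℝ) ≤ p := by exact_mod_cast hp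
  have hq0 : q 0 = p + 2 := by
    have := hq.1 (Fin.zero_le k₁)
    rcases h_cases 0 with h | h | h | h <;> linarith
  have hq1_le : q 1 ≤ p := by
    rcases h_cases 1 with h | h | h | h <;> nlinarith
  have hq1_ge : (p : ℝ) ≤ q 1 :=
    hq.1.le_apply_one (j := k₁) (k := k₂) (by rintro rfl; linarith) (by linarith) hk₂.ge
  exact ⟨hq0, hq1_le.antisymm hq1_ge⟩

theorem K2p_sum_two_largest {p : ℕ} (hp : 2 ≤ p)
    (q : Fin (p + 2) → ℝ) (hq : IsEigSeq (sLapMatrix (K2p p)) q)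
    (d : Fin (p + 2) → ℕ) (hd : IsDegSeq (K2p p) d) :
    q ⟨0, by omega⟩ + q ⟨1, by omega⟩ = 2 * (p : ℝ) + 2 ∧
    2 * (p : ℝ) + 2 > 2 * (p : ℝ) + 1 ∧
    (d ⟨0, by omega⟩ : ℝ) + (d ⟨1, by omega⟩ : ℝ) + 1 = 2 * (p : ℝ) + 1 := by
  obtain ⟨hq0, hq1⟩ := hq.K2p_zero_one hp
  obtain ⟨hd0, hd1⟩ := hd.K2p_zero_one hp
  refine ⟨?_, by linarith, ?_⟩
  · change q 0 + q 1 = _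
    rw [hq0, hq1]
    ring
  · change (d 0 : ℝ) + d 1 + 1 = _
    rw [hd0, hd1]
    ring
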